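/- arXiv:2205.05329 — 6 statements merged into one kernel-verified Lean document; each statement's English description precedes it below -/
import Mathlib

section
/- Let k be a field with char(k)=0 or char(k)>d, V a finite-dimensional k-vector space, and Q ∈ k[V] a homogeneous form of degree d. Let Q̃ : V^d → k be the associated symmetric multilinear form Q̃(x_1,...,x_d) = Δ_{x_1}...Δ_{x_d} Q (so Q(x) = Q̃(x,...,x)/d!). Then rk_k(Q) ≤ prk_k(Q̃), i.e. if Q̃ can be written as a sum of r products R_i·S_i of multilinear forms in complementary nonempty subsets of the variables, then Q is a sum of r products of forms of positive degree. -/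
/-!
Restricting a multilinear form `P` on `(kˢ)^ι` to the diagonal gives a homogeneous polynomial
of degree `|ι|`, and the restriction of a product `R(x_I) S(x_{Iᶜ})` is the product of the
restrictions. So a partition-rank decomposition of `Q̃` restricts to `d! • Q = ∑ Rᵢ Sᵢ` as
functions on `kˢ`. Both sides are homogeneous of degree `d`, and under the characteristic
assumption `d!` is invertible and `k` has at least `d` elements, which is enough for homogeneous
polynomials of degree `d` that agree as functions to be equal.
-/

/-- A multilinear form has partition rank one if it factors as a product of two
multilinear forms on complementary nonempty subsets of the coordinates. -/
def IsPartRankOne {k : Type*} [Field k] {d : ℕ} {V : Fin d → Type*}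
    [∀ i, AddCommGroup (V i)] [∀ i, Module k (V i)]
    (P : MultilinearMap k V k) : Prop :=
  ∃ I : Set (Fin d), I.Nonempty ∧ Iᶜ.Nonempty ∧
    ∃ (R : MultilinearMap k (fun i : I => V i.1) k)
      (S : MultilinearMap k (fun j : ↥Iᶜ => V j.1) k),
      ∀ x : (∀ i, V i), P x = R (fun i => x i.1) * S (fun j => x j.1)

/-- `P` is a sum of `r` partition-rank-one multilinear forms. -/
def HasPrkDecomp {k : Type*} [Field k] {d : ℕ} {V : Fin d → Type*}
    [∀ i, AddCommGroup (V i)] [∀ i, Module k (V i)]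
    (P : MultilinearMap k V k) (r : ℕ) : Prop :=
  ∃ Q : Fin r → MultilinearMap k V k, (∀ i, IsPartRankOne (Q i)) ∧ P = ∑ i, Q i

open MvPolynomial Cardinal

theorem natCast_le_mk_of_ringChar {k : Type*} [Field k] {d : ℕ}
    (hchar : ringChar k = 0 ∨ d < ringChar k) : (d : Cardinal) ≤ #k := by
  rcases finite_or_infinite k with hfin | hinf
  · have hp : ringChar k ≠ 0 := CharP.char_ne_zero_of_finite k _
    have hinj : Function.Injective fun i : Fin (ringChar k) => ((i : ℕ) : k) := fun i j hij =>
      Fin.ext (CharP.natCast_injOn_Iio k (ringChar k) i.isLt j.isLt hij)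
    have hcard := Nat.card_le_card_of_injective _ hinj
    rw [Nat.card_eq_fintype_card, Fintype.card_fin] at hcard
    rw [← Nat.cast_card]
    exact_mod_cast (by omega : d ≤ Nat.card k)
  · exact natCast_le_aleph0.trans (infinite_iff.mp hinf)

theorem natCast_factorial_ne_zero_of_ringChar {k : Type*} [Field k] {d : ℕ}
    (hchar : ringChar k = 0 ∨ d < ringChar k) : (d.factorial : k) ≠ 0 := by
  rcases hchar with h0 | hlt
  · have : CharZero k := (CharP.charP_zero_iff_charZero k).mp (h0 ▸ ringChar.charP k)
    exact Nat.cast_ne_zero.mpr d.factorial_ne_zero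
  · have : Fact (ringChar k).Prime :=
      ⟨(CharP.char_is_prime_or_zero k _).resolve_right (by omega)⟩
    exact ((IsUnit.natCast_factorial_iff_of_charP (ringChar k)).mpr hlt).ne_zero

section DiagonalPoly

variable {k : Type*} [CommRing k] {ι σ : Type*} [Fintype ι] [DecidableEq ι] [Fintype σ]
  [DecidableEq σ]

noncomputable def MultilinearMap.diagonalPoly (P : MultilinearMap k (fun _ : ι => σ → k) k) :
    MvPolynomial σ k :=
  ∑ f : ι → σ, C (P fun i => Pi.single (f i) 1) * ∏ i, X (f i)

theorem MultilinearMap.isHomogeneous_diagonalPoly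
    (P : MultilinearMap k (fun _ : ι => σ → k) k) :
    P.diagonalPoly.IsHomogeneous (Fintype.card ι) := by
  refine IsHomogeneous.sum _ _ _ fun f _ => ?_
  have := (IsHomogeneous.prod Finset.univ (fun i => X (f i)) (fun _ => 1)
      fun i _ => isHomogeneous_X k (f i)).C_mul (P fun i => Pi.single (f i) 1)
  rwa [Finset.sum_const, smul_eq_mul, mul_one, Finset.card_univ] at this

theorem MultilinearMap.eval_diagonalPoly (P : MultilinearMap k (fun _ : ι => σ → k) k)
    (x : σ → k) : eval x P.diagonalPoly = P fun _ => x := by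
  calc eval x P.diagonalPoly
      = ∑ f : ι → σ, P fun i => x (f i) • (Pi.single (f i) 1 : σ → k) := by
        simp only [diagonalPoly, _root_.map_sum, _root_.map_mul, eval_C, _root_.map_prod, eval_X,
          P.map_smul_univ, smul_eq_mul, mul_comm]
    _ = P fun _ => ∑ j, x j • (Pi.single j 1 : σ → k) :=
        (P.map_sum fun _ j => x j • (Pi.single j 1 : σ → k)).symm
    _ = P fun _ => x := by simp only [← pi_eq_sum_univ']

end DiagonalPoly

theorem IsPartRankOne.exists_eval_diagonal_eq_mul {k : Type*} [Field k] {d : ℕ} {σ : Type*}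
    [Fintype σ] [DecidableEq σ] {P : MultilinearMap k (fun _ : Fin d => σ → k) k}
    (hP : IsPartRankOne P) :
    ∃ R S : MvPolynomial σ k,
      (∃ e, 0 < e ∧ e < d ∧ R.IsHomogeneous e ∧ S.IsHomogeneous (d - e)) ∧
      ∀ x, P (fun _ => x) = eval x (R * S) := by
  classical
  obtain ⟨I, hI, hIc, R, S, hRS⟩ := hP
  have hcard_pos : 0 < Fintype.card I := Fintype.card_pos_iff.mpr hI.to_subtype
  have hcard_compl : Fintype.card ↥Iᶜ = d - Fintype.card I := by
    rw [Fintype.card_compl_set, Fintype.card_fin]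
  have hcompl_pos : 0 < Fintype.card ↥Iᶜ := Fintype.card_pos_iff.mpr hIc.to_subtype
  refine ⟨R.diagonalPoly, S.diagonalPoly, ⟨Fintype.card I, hcard_pos, by omega,
    R.isHomogeneous_diagonalPoly, hcard_compl ▸ S.isHomogeneous_diagonalPoly⟩, fun x => ?_⟩
  rw [hRS, map_mul, R.eval_diagonalPoly, S.eval_diagonalPoly]

theorem HasPrkDecomp.exists_eval_diagonal_eq_sum_mul {k : Type*} [Field k] {d : ℕ} {σ : Type*}
    [Fintype σ] [DecidableEq σ] {P : MultilinearMap k (fun _ : Fin d => σ → k) k} {r : ℕ}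
    (hP : HasPrkDecomp P r) :
    ∃ R S : Fin r → MvPolynomial σ k,
      (∀ i, ∃ e, 0 < e ∧ e < d ∧ (R i).IsHomogeneous e ∧ (S i).IsHomogeneous (d - e)) ∧
      ∀ x, P (fun _ => x) = ∑ i, eval x (R i * S i) := by
  obtain ⟨P, hP, rfl⟩ := hP
  choose R S hdeg hRS using fun i => (hP i).exists_eval_diagonal_eq_mul
  exact ⟨R, S, hdeg, fun x => by simp only [sum_apply, hRS]⟩

theorem schmidt_rank_le_partition_rank_general {k : Type*} [Field k] (d s : ℕ)
    (hchar : ringChar k = 0 ∨ d < ringChar k)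
    (Q : MvPolynomial (Fin s) k) (hQ : Q.IsHomogeneous d)
    (Qt : MultilinearMap k (fun _ : Fin d => Fin s → k) k)
    (hrel : ∀ x : Fin s → k, Qt (fun _ => x) = (d.factorial : k) * MvPolynomial.eval x Q)
    (r : ℕ) (hdec : HasPrkDecomp Qt r) :
    ∃ R S : Fin r → MvPolynomial (Fin s) k,
      (∀ i, ∃ e, 0 < e ∧ e < d ∧ (R i).IsHomogeneous e ∧ (S i).IsHomogeneous (d - e)) ∧
      Q = ∑ i, R i * S i := by
  obtain ⟨R, S, hdeg, hdiag⟩ := hdec.exists_eval_diagonal_eq_sum_mul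
  set c : k := (d.factorial : k)⁻¹
  have hc : c * d.factorial = 1 := inv_mul_cancel₀ (natCast_factorial_ne_zero_of_ringChar hchar)
  have hdeg' : ∀ i, ∃ e, 0 < e ∧ e < d ∧
      (C c * R i).IsHomogeneous e ∧ (S i).IsHomogeneous (d - e) :=
    fun i => (hdeg i).imp fun _ ⟨he, hed, hR, hS⟩ => ⟨he, hed, hR.C_mul c, hS⟩
  have hsum : (∑ i, C c * R i * S i).IsHomogeneous d := by
    refine IsHomogeneous.sum _ _ _ fun i _ => ?_
    obtain ⟨e, -, hed, hR, hS⟩ := hdeg' i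
    simpa only [Nat.add_sub_cancel' hed.le] using hR.mul hS
  refine ⟨fun i => C c * R i, S, hdeg', hQ.funext_of_le_card hsum (fun x => ?_)
    (natCast_le_mk_of_ringChar hchar)⟩
  calc eval x Q = c * Qt (fun _ => x) := by rw [hrel, ← mul_assoc, hc, one_mul]
    _ = eval x (∑ i, C c * R i * S i) := by
      simp only [hdiag, Finset.mul_sum, map_sum, mul_assoc, map_mul, eval_C]

/-- if the associated symmetric multilinear form `Q̃` of a degree-`d` form `Q`
(char k = 0 or > d) is a sum of `r` partition-rank-one multilinear forms, then `Q` is a sum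
of `r` products `R_i * S_i` of forms of positive degree (< d). -/
theorem schmidt_rank_le_partition_rank {k : Type*} [Field k] (d s : ℕ) (hd : 1 < d)
    (hchar : ringChar k = 0 ∨ d < ringChar k)
    (Q : MvPolynomial (Fin s) k) (hQ : Q.IsHomogeneous d)
    (Qt : MultilinearMap k (fun _ : Fin d => Fin s → k) k)
    (hsymm : ∀ (σ : Equiv.Perm (Fin d)) (x : Fin d → Fin s → k),
      Qt (fun i => x (σ i)) = Qt x)
    (hrel : ∀ x : Fin s → k, Qt (fun _ => x) = (d.factorial : k) * MvPolynomial.eval x Q)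
    (r : ℕ) (hdec : HasPrkDecomp Qt r) :
    ∃ R S : Fin r → MvPolynomial (Fin s) k,
      (∀ i, ∃ e, 0 < e ∧ e < d ∧ (R i).IsHomogeneous e ∧ (S i).IsHomogeneous (d - e)) ∧
      Q = ∑ i, R i * S i :=
  schmidt_rank_le_partition_rank_general d s hchar Q hQ Qt hrel r hdec
end

section
/- Let k be a field, d ≥ 2, and for 1 ≤ j ≤ n define the multilinear forms D_j : (k^{n r̄})^d → k by D_j(x_1,...,x_d) = Σ_{m=(j-1)r̄+1}^{j r̄} Π_{i=1}^d x_i(m). Then every nontrivial k-linear combination Σ_j a_j D_j has partition rank at least r̄; that is, prk_k(D_1,...,D_n) = r̄. -/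
/-!
Evaluating `∑ j, a j • D_j` on tuples of basis vectors turns a partition-rank decomposition of it
into a decomposition of the diagonal tensor with entries `c (j, m) = a j` as a sum of split
products, so the lower bound follows from Naslund's theorem: a diagonal tensor whose diagonal has
`N` nonzero entries has partition rank at least `N`. We induct on the order. Put slot `0` into the
first factor of every term; the `s` terms whose first factor sees slot `0` only impose `s` linear
conditions on a vector `h`, and some solution `h` has at least `|ι| - s` nonzero entries.
Contracting slot `0` with `h` kills those `s` terms and leaves a decomposition of the diagonal
tensor with entries `h * c`, which has at least `N - s` nonzero entries, into the remaining terms.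
For the upper bound, `D_j` is a sum of `r̄` monomials, each of partition rank one.
-/

open scoped BigOperators

/-- The diagonal multilinear forms `D_j(x_1,...,x_d) = Σ_{m} Π_i x_i(j, m)`, where the
`n·r̄` coordinates are indexed by pairs `(j, m) : Fin n × Fin r̄` (the block of `D_j`
consisting of the coordinates with first component `j`). -/
noncomputable def diagForm (k : Type*) [Field k] (d n rb : ℕ) (j : Fin n) :
    MultilinearMap k (fun _ : Fin d => (Fin n × Fin rb) → k) k :=
  ∑ m : Fin rb,
    (MultilinearMap.mkPiRing k (Fin d) (1 : k)).compLinearMap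
      (fun _ => LinearMap.proj (j, m))

open Finset

section SplitProducts

variable {k ι : Type*}

/-- Functions `(α → ι) → k` are the tensors of `(k^ι)^{⊗α}` (their values on tuples of basis
vectors); the split products among them are the tensors of partition rank one. -/
def IsSplitProduct [Mul k] {α : Type*} (P : (α → ι) → k) : Prop :=
  ∃ A : Set α, A.Nonempty ∧ Aᶜ.Nonempty ∧
    ∃ f g : (α → ι) → k, DependsOn f A ∧ DependsOn g Aᶜ ∧ P = f * g

theorem IsSplitProduct.exists_mem [CommMagma k] {α : Type*} {P : (α → ι) → k}
    (hP : IsSplitProduct P) (i : α) :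
    ∃ A : Set α, i ∈ A ∧ Aᶜ.Nonempty ∧
      ∃ f g : (α → ι) → k, DependsOn f A ∧ DependsOn g Aᶜ ∧ P = f * g := by
  obtain ⟨A, hA, hAc, f, g, hf, hg, rfl⟩ := hP
  by_cases hi : i ∈ A
  · exact ⟨A, hi, hAc, f, g, hf, hg, rfl⟩
  · exact ⟨Aᶜ, hi, by rwa [compl_compl], g, f, hg, by rwa [compl_compl], mul_comm f g⟩

theorem not_isSplitProduct_of_subsingleton [Mul k] {α : Type*} [Subsingleton α]
    (P : (α → ι) → k) : ¬ IsSplitProduct P := by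
  rintro ⟨A, ⟨i, hi⟩, ⟨j, hj⟩, -⟩
  exact hj (Subsingleton.elim i j ▸ hi)

end SplitProducts

section Contraction

variable {k ι : Type*} [CommSemiring k] {d : ℕ}

def diagFun [Fintype ι] [DecidableEq ι] {α : Type*} [Fintype α] (c : ι → k) (x : α → ι) : k :=
  ∑ p, if ∀ i, x i = p then c p else 0

theorem diagFun_const [Fintype ι] [DecidableEq ι] {α : Type*} [Fintype α] [Nonempty α]
    (c : ι → k) (a : ι) : diagFun c (fun _ : α => a) = c a := by
  simp [diagFun]

def contract [Fintype ι] (h : ι → k) (F : (Fin (d + 1) → ι) → k) (y : Fin d → ι) : k :=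
  ∑ a, h a * F (Fin.cons a y)

theorem contract_sum [Fintype ι] {τ : Type*} [Fintype τ] (h : ι → k)
    (F : τ → (Fin (d + 1) → ι) → k) :
    contract h (∑ t, F t) = ∑ t, contract h (F t) := by
  funext y
  simp only [contract, Finset.sum_apply, mul_sum]
  exact sum_comm

theorem contract_diagFun [Fintype ι] [DecidableEq ι] (h c : ι → k) :
    contract h (diagFun (α := Fin (d + 1)) c) = diagFun (h * c) := by
  funext y
  simp [contract, diagFun, Fin.forall_fin_succ, ite_and]

theorem Fin.cons_eqOn_cons {β : Type*} {A : Set (Fin (d + 1))} (a : β) {y y' : Fin d → β}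
    (h : Set.EqOn y y' (Fin.succ ⁻¹' A)) :
    Set.EqOn (Fin.cons a y : Fin (d + 1) → β) (Fin.cons a y' : Fin (d + 1) → β) A := by
  intro i hi
  cases i using Fin.cases with
  | zero => rfl
  | succ j => simpa using h (show j ∈ Fin.succ ⁻¹' A from hi)

theorem DependsOn.comp_cons {β : Type*} {F : (Fin (d + 1) → ι) → β} {A : Set (Fin (d + 1))}
    (hF : DependsOn F A) (a : ι) : DependsOn (fun y => F (Fin.cons a y)) (Fin.succ ⁻¹' A) :=
  fun _ _ h => hF (Fin.cons_eqOn_cons a h)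

theorem DependsOn.contract [Fintype ι] {F : (Fin (d + 1) → ι) → k} {A : Set (Fin (d + 1))}
    (hF : DependsOn F A) (h : ι → k) : DependsOn (contract h F) (Fin.succ ⁻¹' A) :=
  fun _ _ hyy => sum_congr rfl fun a _ => congrArg (h a * ·) (hF.comp_cons a hyy)

theorem contract_mul_of_dependsOn [Fintype ι] {f g : (Fin (d + 1) → ι) → k}
    {s : Set (Fin (d + 1))} (hg : DependsOn g s) (hs : 0 ∉ s) (h : ι → k) (a₀ : ι) :
    contract h (f * g) = contract h f * fun y => g (Fin.cons a₀ y) := by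
  funext y
  simp only [contract, Pi.mul_apply, sum_mul, mul_assoc]
  refine sum_congr rfl fun a _ => ?_
  congr 2
  refine hg fun i hi => ?_
  cases i using Fin.cases with
  | zero => exact absurd hi hs
  | succ j => rfl

theorem contract_eq_zero_of_dependsOn_zero [Fintype ι] {f : (Fin (d + 1) → ι) → k}
    (hf : DependsOn f {0}) (h : ι → k) (hh : ∑ a, h a * f (fun _ => a) = 0) : contract h f = 0 := by
  funext y
  rw [Pi.zero_apply, ← hh]
  refine sum_congr rfl fun a _ => ?_
  rw [hf]
  rintro i rfl
  rfl

theorem isSplitProduct_contract_mul [Fintype ι] [Nonempty ι] {f g : (Fin (d + 1) → ι) → k}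
    {A : Set (Fin (d + 1))} (hA₀ : 0 ∈ A) (hA : A ≠ {0}) (hAc : Aᶜ.Nonempty)
    (hf : DependsOn f A) (hg : DependsOn g Aᶜ) (h : ι → k) :
    IsSplitProduct (contract h (f * g)) := by
  rw [contract_mul_of_dependsOn hg (by simpa using hA₀) h (Classical.arbitrary ι)]
  refine ⟨Fin.succ ⁻¹' A, ?_, ?_, _, _, hf.contract h, hg.comp_cons _, rfl⟩
  · by_contra! hempty
    refine hA (Set.eq_singleton_iff_unique_mem.2 ⟨hA₀, fun i hi => ?_⟩)
    cases i using Fin.cases with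
    | zero => rfl
    | succ j => exact absurd hi (Set.eq_empty_iff_forall_notMem.1 hempty j)
  · obtain ⟨i, hi⟩ := hAc
    cases i using Fin.cases with
    | zero => exact absurd hA₀ hi
    | succ j => exact ⟨j, hi⟩

end Contraction

section LinearAlgebra

variable {k ι : Type*} [Field k] [DecidableEq k] [Fintype ι]

theorem Submodule.exists_mem_finrank_le_card_support (W : Submodule k (ι → k)) :
    ∃ h ∈ W, Module.finrank k W ≤ #{a | h a ≠ 0} := by
  obtain ⟨_, ⟨h, hW, rfl⟩, hmax⟩ :=
    Set.exists_max_image ((fun h : ι → k => ({a | h a ≠ 0} : Finset ι)) '' W) card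
      (Set.toFinite _) ⟨_, 0, W.zero_mem, rfl⟩
  refine ⟨h, hW, ?_⟩
  set s : Finset ι := {a | h a ≠ 0}
  -- an `h' ∈ W` vanishing on `s` but not everywhere would give `h + h'` a larger support
  have hinj : Function.Injective
      ((LinearMap.funLeft k k (Subtype.val : s → ι)).comp W.subtype) := by
    rw [← LinearMap.ker_eq_bot, LinearMap.ker_eq_bot']
    rintro ⟨h', hh'⟩ hres
    have hvanish : ∀ a, h a ≠ 0 → h' a = 0 := fun a ha =>
      congrFun hres ⟨a, by simpa [s] using ha⟩
    by_contra hne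
    obtain ⟨a, ha⟩ : ∃ a, h' a ≠ 0 := by
      by_contra! h0
      exact hne (Subtype.ext (funext h0))
    have hlt : s ⊂ ({a | (h + h') a ≠ 0} : Finset ι) := by
      refine (ssubset_iff_of_subset fun b hb => ?_).2 ⟨a, ?_, ?_⟩
      · have hb : h b ≠ 0 := by simpa [s] using hb
        simpa [hvanish b hb] using hb
      · have : h a = 0 := by_contra fun h0 => ha (hvanish a h0)
        simpa [this] using ha
      · simpa [s] using fun h0 => ha (hvanish a h0)
    exact (card_lt_card hlt).not_ge (hmax _ ⟨_, W.add_mem hW hh', rfl⟩)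
  simpa using LinearMap.finrank_le_finrank_of_injective hinj

open Matrix in
theorem Matrix.exists_mulVec_eq_zero_card_le {σ : Type*} [Fintype σ] (M : Matrix σ ι k) :
    ∃ h, M *ᵥ h = 0 ∧ Fintype.card ι ≤ #{a | h a ≠ 0} + Fintype.card σ := by
  obtain ⟨h, hker, hcard⟩ := (LinearMap.ker M.mulVecLin).exists_mem_finrank_le_card_support
  refine ⟨h, hker, ?_⟩
  have hrank := LinearMap.finrank_range_add_finrank_ker M.mulVecLin
  have hrange := Submodule.finrank_le (LinearMap.range M.mulVecLin)
  simp only [Module.finrank_fintype_fun_eq_card] at hrank hrange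
  omega

theorem card_support_add_card_support_le_card_support_mul (h c : ι → k) :
    #{a | h a ≠ 0} + #{a | c a ≠ 0} ≤ #{a | (h * c) a ≠ 0} + Fintype.card ι := by
  classical
  rw [← card_union_add_card_inter, ← filter_and, ← filter_or]
  simp only [Pi.mul_apply, ne_eq, mul_eq_zero, not_or]
  have := card_le_univ ({a | ¬h a = 0 ∨ ¬c a = 0} : Finset ι)
  omega

end LinearAlgebra

theorem card_support_le_of_diagFun_eq_sum {k ι : Type*} [Field k] [DecidableEq k] [Fintype ι]
    [DecidableEq ι] {d : ℕ} {τ : Type*} [Fintype τ] (c : ι → k)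
    (P : τ → (Fin (d + 1) → ι) → k) (hP : ∀ t, IsSplitProduct (P t))
    (hsum : diagFun c = ∑ t, P t) : #{a | c a ≠ 0} ≤ Fintype.card τ := by
  induction d generalizing τ c with
  | zero =>
    have : IsEmpty τ := ⟨fun t => not_isSplitProduct_of_subsingleton (α := Fin 1) _ (hP t)⟩
    have hc : ∀ a, c a = 0 := fun a => by simpa [diagFun_const] using congrFun hsum fun _ => a
    simp [hc]
  | succ d ih =>
    classical
    cases isEmpty_or_nonempty ι
    · simp
    choose A hA₀ hAc f g hf hg hPfg using fun t => (hP t).exists_mem 0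
    -- Contracting slot `0` with `h` kills the slices (`A t = {0}`) and turns the other terms into
    -- split products of one order less; `h` solves one linear equation per slice.
    obtain ⟨h, hh, hcard⟩ := Matrix.exists_mulVec_eq_zero_card_le
      (Matrix.of fun (t : {t // A t = {0}}) a => f t fun _ => a)
    have hslice : ∀ t, A t = {0} → contract h (P t) = 0 := by
      intro t ht
      rw [hPfg t,
        contract_mul_of_dependsOn (hg t) (by simpa using hA₀ t) h (Classical.arbitrary ι),
        contract_eq_zero_of_dependsOn_zero (ht ▸ hf t) h, zero_mul]
      simpa [Matrix.mulVec, dotProduct, mul_comm] using congrFun hh ⟨t, ht⟩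
    have hsplit : ∀ t, A t ≠ {0} → IsSplitProduct (contract h (P t)) := fun t ht =>
      hPfg t ▸ isSplitProduct_contract_mul (hA₀ t) ht (hAc t) (hf t) (hg t) h
    have hsum' : diagFun (h * c) = ∑ t : {t // A t ≠ {0}}, contract h (P t) := by
      rw [← contract_diagFun, hsum, contract_sum,
        ← Fintype.sum_subtype_add_sum_subtype (fun t => A t ≠ {0})]
      rw [sum_eq_zero fun (t : {t // ¬A t ≠ {0}}) _ => hslice t (not_not.1 t.2), add_zero]
    have hind := ih (h * c) (fun t : {t // A t ≠ {0}} => contract h (P t))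
      (fun t => hsplit t t.2) hsum'
    have hsupp := card_support_add_card_support_le_card_support_mul h c
    have hτ : Fintype.card {t // A t ≠ {0}} = Fintype.card τ - Fintype.card {t // A t = {0}} :=
      Fintype.card_subtype_compl _
    have := Fintype.card_subtype_le (fun t => A t = {0})
    omega

section PartitionRank

variable {k : Type*} [Field k] {d : ℕ}

theorem IsPartRankOne.isSplitProduct_comp {ι : Type*} {V : Fin d → Type*}
    [∀ i, AddCommGroup (V i)] [∀ i, Module k (V i)] {Q : MultilinearMap k V k}
    (hQ : IsPartRankOne Q) (e : ∀ i, ι → V i) :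
    IsSplitProduct fun x : Fin d → ι => Q fun i => e i (x i) := by
  obtain ⟨I, hI, hIc, R, S, hRS⟩ := hQ
  refine ⟨I, hI, hIc, fun x => R fun i => e i (x i), fun x => S fun i => e i (x i), ?_, ?_, ?_⟩
  · exact fun x y hxy => congrArg R (funext fun i => by rw [hxy i i.2])
  · exact fun x y hxy => congrArg S (funext fun i => by rw [hxy i i.2])
  · exact funext fun x => hRS _

theorem isPartRankOne_mkPiRing_compLinearMap (hd : 2 ≤ d) {V : Fin d → Type*}
    [∀ i, AddCommGroup (V i)] [∀ i, Module k (V i)] (φ : ∀ i, V i →ₗ[k] k) :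
    IsPartRankOne ((MultilinearMap.mkPiRing k (Fin d) (1 : k)).compLinearMap φ) := by
  classical
  have : Nontrivial (Fin d) := Fin.nontrivial_iff_two_le.2 hd
  obtain ⟨i, j, hij⟩ := exists_pair_ne (Fin d)
  refine ⟨{i}, Set.singleton_nonempty i, ⟨j, hij.symm⟩,
    (MultilinearMap.mkPiRing k _ (1 : k)).compLinearMap fun l => φ l,
    (MultilinearMap.mkPiRing k _ (1 : k)).compLinearMap fun l => φ l, fun x => ?_⟩
  simp only [MultilinearMap.compLinearMap_apply, MultilinearMap.mkPiRing_apply, smul_eq_mul,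
    mul_one]
  convert (Fintype.prod_subtype_mul_prod_subtype (· ∈ ({i} : Set (Fin d)))
    fun l => φ l (x l)).symm using 3
  congr!

theorem hasPrkDecomp_diagForm (hd : 2 ≤ d) (n rb : ℕ) (j : Fin n) :
    HasPrkDecomp (diagForm k d n rb j) rb :=
  ⟨_, fun _ => isPartRankOne_mkPiRing_compLinearMap hd _, rfl⟩

theorem sum_smul_diagForm_apply_single {n rb : ℕ} (a : Fin n → k)
    (x : Fin d → Fin n × Fin rb) :
    (∑ j, a j • diagForm k d n rb j) (fun i => Pi.single (x i) 1) =
      diagFun (fun p => a p.1) x := by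
  classical
  simp only [diagForm, _root_.sum_apply, _root_.smul_apply,
    MultilinearMap.compLinearMap_apply, MultilinearMap.mkPiRing_apply, LinearMap.proj_apply,
    Pi.single_apply, prod_boole, smul_eq_mul, mul_one, mul_sum, diagFun, Fintype.sum_prod_type]
  simp [eq_comm]

end PartitionRank

/-- every nontrivial linear combination of the `D_j` has partition rank at
least `r̄`, and the collective partition rank of `(D_1,...,D_n)` equals `r̄`. -/
theorem diagonal_forms_partition_rank (k : Type*) [Field k] (d n rb : ℕ)
    (hd : 2 ≤ d) (hn : 0 < n) :
    (∀ a : Fin n → k, a ≠ 0 →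
        ∀ m : ℕ, HasPrkDecomp (∑ j, a j • diagForm k d n rb j) m → rb ≤ m) ∧
    (∃ a : Fin n → k, a ≠ 0 ∧ HasPrkDecomp (∑ j, a j • diagForm k d n rb j) rb) := by
  classical
  refine ⟨fun a ha m ⟨Q, hQ, hsum⟩ => ?_, Pi.single ⟨0, hn⟩ 1, by simp, ?_⟩
  · obtain ⟨d, rfl⟩ : ∃ d', d = d' + 1 := ⟨d - 1, by omega⟩
    have hdiag : diagFun (fun p : Fin n × Fin rb => a p.1) =
        ∑ t, fun x => Q t fun i => Pi.single (x i) 1 := by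
      funext x
      rw [← sum_smul_diagForm_apply_single, hsum, _root_.sum_apply, Finset.sum_apply]
    obtain ⟨j, hj⟩ := Function.ne_iff.1 ha
    calc rb = #(({j} : Finset (Fin n)) ×ˢ (univ : Finset (Fin rb))) := by simp
      _ ≤ #{p : Fin n × Fin rb | a p.1 ≠ 0} := card_le_card fun p => by aesop
      _ ≤ Fintype.card (Fin m) := card_support_le_of_diagFun_eq_sum _ _
          (fun t => (hQ t).isSplitProduct_comp fun _ p => Pi.single p 1) hdiag
      _ = m := Fintype.card_fin m
  · simpa [Pi.single_apply, ite_smul] using hasPrkDecomp_diagForm hd n rb ⟨0, hn⟩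
end

section
/- Let k be a field, D : (k^N)^d → k the multilinear form D(x_1,...,x_d) = Σ_{m=1}^{N} Π_{i=1}^d x_i(m). Then the variety Z_D = {(x_2,...,x_d) : D(·,x_2,...,x_d) ≡ 0} equals the union over functions σ : [N] → {2,...,d} of the linear subspaces {x_{σ(m)}(m) = 0 for all m ∈ [N]}; in particular Z_D has codimension exactly N in (k^N)^{d-1}. -/
open scoped BigOperators

/-!
A tuple `x` lies in `Z_D` iff `∏ᵢ xᵢ(m) = 0` for every `m`, i.e. iff some choice `σ(m)` of a
vanishing factor exists for each `m`; so `Z_D` is the union of the coordinate subspaces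
`V_σ = {x_{σ(m)}(m) = 0}`. Over an infinite field the vanishing ideal of `V_σ` is the prime
ideal generated by the `N` killed variables, with quotient a polynomial ring in the remaining
`eN - N` variables. A prime containing the finite intersection of these ideals contains one of
them, so every chain of primes over `Z_D` lies over a single `V_σ`, and the dimension is
`eN - N`.
-/

open MvPolynomial

theorem Order.krullDim_iUnion_of_isUpperSet {α ι : Type*} [Preorder α] {U : ι → Set α}
    (hU : ∀ i, IsUpperSet (U i)) :
    Order.krullDim (⋃ i, U i) = ⨆ i, Order.krullDim (U i) := by
  refine le_antisymm (iSup_le fun p => ?_) (iSup_le fun i => ?_)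
  · obtain ⟨i, hi⟩ := Set.mem_iUnion.mp p.head.2
    let q : LTSeries (U i) :=
      ⟨p.length, fun j => ⟨p j, hU i (p.monotone (Fin.zero_le j)) hi⟩, fun j => p.step j⟩
    exact (LTSeries.length_le_krullDim q).trans (le_iSup (fun i => Order.krullDim (U i)) i)
  · exact Order.krullDim_le_of_strictMono (fun x => ⟨x.1, Set.mem_iUnion.mpr ⟨i, x.2⟩⟩)
      fun _ _ h => h

theorem Ideal.IsPrime.iInf_le_iff {R ι : Type*} [CommRing R] [Fintype ι] {I : ι → Ideal R}
    {P : Ideal R} (hP : P.IsPrime) : ⨅ i, I i ≤ P ↔ ∃ i, I i ≤ P := by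
  simpa [Finset.inf_univ_eq_iInf] using hP.inf_le' (s := Finset.univ) (f := I)

theorem PrimeSpectrum.zeroLocus_iInf_of_fintype {R ι : Type*} [CommRing R] [Fintype ι]
    (I : ι → Ideal R) :
    zeroLocus ((⨅ i, I i : Ideal R) : Set R) = ⋃ i, zeroLocus (I i : Set R) := by
  ext p
  simp only [mem_zeroLocus, SetLike.coe_subset_coe, Set.mem_iUnion, p.isPrime.iInf_le_iff]

theorem PrimeSpectrum.isUpperSet_zeroLocus {R : Type*} [CommRing R] (s : Set R) :
    IsUpperSet (zeroLocus s) :=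
  fun _ _ hpq hp => Set.Subset.trans hp hpq

theorem ringKrullDim_quotient_iInf {R ι : Type*} [CommRing R] [Fintype ι] (I : ι → Ideal R) :
    ringKrullDim (R ⧸ ⨅ i, I i) = ⨆ i, ringKrullDim (R ⧸ I i) := by
  simp only [ringKrullDim_quotient]
  rw [PrimeSpectrum.zeroLocus_iInf_of_fintype]
  exact Order.krullDim_iUnion_of_isUpperSet fun i => PrimeSpectrum.isUpperSet_zeroLocus _

theorem MvPolynomial.vanishingIdeal_iUnion {σ k ι : Type*} [Field k] (V : ι → Set (σ → k)) :
    vanishingIdeal k (⋃ i, V i) = ⨅ i, vanishingIdeal k (V i) :=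
  zeroLocus_vanishingIdeal_galoisConnection.u_iInf

section killCompl

variable {σ τ : Type*} {f : σ → τ}

theorem MvPolynomial.killCompl_surjective {R : Type*} [CommSemiring R] (hf : f.Injective) :
    Function.Surjective (killCompl (R := R) hf) :=
  fun p => ⟨rename f p, killCompl_rename_app hf p⟩

theorem MvPolynomial.ringKrullDim_quotient_ker_killCompl {R : Type*} [CommRing R]
    [IsNoetherianRing R] [Finite σ] (hf : f.Injective) :
    ringKrullDim (MvPolynomial τ R ⧸ RingHom.ker (killCompl (R := R) hf)) =
      ringKrullDim R + Nat.card σ := by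
  rw [ringKrullDim_eq_of_ringEquiv
    (RingHom.quotientKerEquivOfSurjective (killCompl_surjective hf)),
    MvPolynomial.ringKrullDim_of_isNoetherianRing]

theorem MvPolynomial.aeval_killCompl {R S : Type*} [CommSemiring R] [CommSemiring S]
    [Algebra R S] (hf : f.Injective) {x : τ → S} (hx : ∀ t ∉ Set.range f, x t = 0)
    (p : MvPolynomial τ R) :
    aeval (x ∘ f) (killCompl hf p) = aeval x p := by
  classical
  rw [← AlgHom.comp_apply]
  congr 1
  ext t
  by_cases ht : t ∈ Set.range f
  · obtain ⟨s, rfl⟩ := ht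
    simp [killCompl]
  · rw [Set.mem_range] at ht
    simp [killCompl, ht, hx t]

theorem MvPolynomial.vanishingIdeal_eq_ker_killCompl {k : Type*} [Field k] [Infinite k]
    (hf : f.Injective) :
    vanishingIdeal k {x : τ → k | ∀ t ∉ Set.range f, x t = 0} =
      RingHom.ker (killCompl (R := k) hf) := by
  ext p
  simp only [mem_vanishingIdeal_iff, Set.mem_ofPred_eq, RingHom.mem_ker]
  constructor
  · intro hp
    refine MvPolynomial.funext fun z => ?_
    have hz : ∀ t ∉ Set.range f, Function.extend f z 0 t = 0 := fun t ht => by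
      simp [Function.extend_apply' _ _ _ (fun ⟨s, hs⟩ => ht ⟨s, hs⟩)]
    rw [map_zero, ← hp _ hz, ← aeval_killCompl hf hz, Function.extend_comp hf, aeval_eq_eval]
  · intro hp x hx
    rw [← aeval_killCompl hf hx, hp, map_zero]

end killCompl

section diagonal

variable {ι M R : Type*}

theorem forall_sum_mul_eq_zero_iff [Fintype M] [CommSemiring R] {c : M → R} :
    (∀ y : M → R, ∑ m, y m * c m = 0) ↔ ∀ m, c m = 0 := by
  simpa [dotProduct, mul_comm, funext_iff] using dotProduct_eq_zero_iff (v := c)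

theorem setOf_forall_eq_zero_eq_notMem_range [Zero R] (σ : M → ι) :
    {x : ι × M → R | ∀ m, x (σ m, m) = 0} =
      {x | ∀ t ∉ Set.range (Subtype.val : {t : ι × M // t.1 ≠ σ t.2} → ι × M), x t = 0} := by
  ext x
  simp only [Set.mem_ofPred_eq, Subtype.range_coe_subtype, not_not, Prod.forall]
  exact ⟨fun h a m ham => ham ▸ h m, fun h m => h _ m rfl⟩

theorem Nat.card_subtype_fst_ne [Finite ι] [Finite M] (σ : M → ι) :
    Nat.card {t : ι × M // t.1 ≠ σ t.2} = Nat.card ι * Nat.card M - Nat.card M := by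
  classical
  have := Fintype.ofFinite ι
  have := Fintype.ofFinite M
  simp only [Nat.card_eq_fintype_card]
  rw [Fintype.card_subtype_compl, Fintype.card_prod, Fintype.card_congr
    ⟨fun t => t.1.2, fun m => ⟨(σ m, m), rfl⟩, fun t => Subtype.ext (Prod.ext t.2.symm rfl),
      fun _ => rfl⟩]

variable [Fintype ι] [Fintype M] [CommRing R] [NoZeroDivisors R] [Nontrivial R]

theorem setOf_forall_sum_mul_prod_eq_zero :
    {x : ι → M → R | ∀ y : M → R, ∑ m, y m * ∏ i, x i m = 0} =
      ⋃ σ : M → ι, {x | ∀ m, x (σ m) m = 0} := by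
  ext x
  simp only [Set.mem_ofPred_eq, Set.mem_iUnion, forall_sum_mul_eq_zero_iff,
    Finset.prod_eq_zero_iff, Finset.mem_univ, true_and]
  exact Classical.skolem

theorem setOf_forall_sum_mul_prod_eq_zero_uncurry :
    {x : ι × M → R | ∀ y : M → R, ∑ m, y m * ∏ i, x (i, m) = 0} =
      ⋃ σ : M → ι, {x | ∀ m, x (σ m, m) = 0} := by
  ext x
  simpa using Set.ext_iff.mp setOf_forall_sum_mul_prod_eq_zero (Function.curry x)

end diagonal

/-- The last `d - 1` variables are indexed by `Fin e`, `e = d - 1`. The codimension is read off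
the Krull dimension of the coordinate ring of the Zariski closure of the `k`-points of `Z_D`,
which is the geometric one because `k` is infinite. -/
theorem diagonal_form_singular_locus (k : Type*) [Field k] [Infinite k] (N e : ℕ)
    (he : 1 ≤ e) :
    ({x : Fin e → Fin N → k | ∀ y : Fin N → k, (∑ m, y m * ∏ i, x i m) = 0}
        = ⋃ σ : Fin N → Fin e, {x | ∀ m, x (σ m) m = 0}) ∧
    ringKrullDim (MvPolynomial (Fin e × Fin N) k ⧸
        MvPolynomial.vanishingIdeal k
          {x : Fin e × Fin N → k | ∀ y : Fin N → k, (∑ m, y m * ∏ i, x (i, m)) = 0})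
      = ((e * N - N : ℕ) : WithBot ℕ∞) := by
  refine ⟨setOf_forall_sum_mul_prod_eq_zero, ?_⟩
  have : Nonempty (Fin N → Fin e) := ⟨fun _ => ⟨0, he⟩⟩
  rw [setOf_forall_sum_mul_prod_eq_zero_uncurry,
    Set.iUnion_congr setOf_forall_eq_zero_eq_notMem_range, vanishingIdeal_iUnion,
    iInf_congr fun σ => vanishingIdeal_eq_ker_killCompl Subtype.val_injective,
    ringKrullDim_quotient_iInf]
  simp only [ringKrullDim_quotient_ker_killCompl, ringKrullDim_eq_zero_of_field, zero_add,
    Nat.card_subtype_fst_ne, Nat.card_fin, ciSup_const]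
end

section
/- Let P : V_1 × ... × V_d → k and P^l_{j_1,...,j_d} : M_{s_1×t}(k) × ... × M_{s_d×t}(k) → k be defined by P^l_{j_1,...,j_d}(A_1,...,A_d) = (P_l ∘ (A_1 × ... × A_d))(e_{j_1},...,e_{j_d}) for multilinear forms P_1,...,P_n on k^{s_1} × ... × k^{s_d}. Then the collective partition rank of the family (P^l_{j_1,...,j_d}) over all l ∈ [n] and (j_1,...,j_d) ∈ [t]^d equals prk_k(P_1,...,P_n). -/
open scoped BigOperators

/-- The partition rank of a multilinear form. -/
noncomputable def prk {k : Type*} [Field k] {d : ℕ} {V : Fin d → Type*}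
    [∀ i, AddCommGroup (V i)] [∀ i, Module k (V i)]
    (P : MultilinearMap k V k) : ℕ :=
  sInf {r | HasPrkDecomp P r}

/-- The collective partition rank of a family of multilinear forms: the minimum partition
rank of a nontrivial linear combination. -/
noncomputable def cprk {k : Type*} [Field k] {d : ℕ} {V : Fin d → Type*}
    [∀ i, AddCommGroup (V i)] [∀ i, Module k (V i)]
    {ι : Type*} [Fintype ι] (P : ι → MultilinearMap k V k) : ℕ :=
  sInf {r | ∃ a : ι → k, a ≠ 0 ∧ HasPrkDecomp (∑ i, a i • P i) r}

/-- The linear map extracting the `j`-th column entries of a matrix, as a vector. -/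
def colProj (k : Type*) [Field k] {s t : ℕ} (j : Fin t) :
    Matrix (Fin s) (Fin t) k →ₗ[k] (Fin s → k) where
  toFun A := fun m => A m j
  map_add' _ _ := rfl
  map_smul' _ _ := rfl

/-- `P_{j_1,...,j_d}(A_1,...,A_d) = P(A_1 e_{j_1}, ..., A_d e_{j_d})`, the multilinear form
on matrix spaces obtained by substituting the `j_i`-th column of `A_i` for `x_i`. -/
noncomputable def matrixSubstForm {k : Type*} [Field k] {d : ℕ} {s : Fin d → ℕ} {t : ℕ}
    (P : MultilinearMap k (fun i : Fin d => Fin (s i) → k) k) (j : Fin d → Fin t) :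
    MultilinearMap k (fun i : Fin d => Matrix (Fin (s i)) (Fin t) k) k :=
  P.compLinearMap (fun i => colProj k (j i))

/-! Partition-rank decompositions survive linear substitution into the variables, so two families
have the same collective partition rank as soon as every nontrivial combination of each is a
substitution into a nontrivial combination of the other. Composing a combination of the
`P^l_j` with the embeddings `x ↦ x e_jᵀ` (vectors placed in column `j`) kills every term with
`j' ≠ j` and gives `∑ b(l, j) P_l`; conversely `∑ a_l P_l` composed with the projection onto a
fixed column `j₀` is `∑ a_l P^l_{j₀}`, which needs `t > 0`. -/

section PartitionRank

variable {k : Type*} [Field k] {d : ℕ} {V W : Fin d → Type*}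
    [∀ i, AddCommGroup (V i)] [∀ i, Module k (V i)]
    [∀ i, AddCommGroup (W i)] [∀ i, Module k (W i)]

theorem IsPartRankOne.compLinearMap {P : MultilinearMap k V k} (hP : IsPartRankOne P)
    (f : ∀ i, W i →ₗ[k] V i) : IsPartRankOne (P.compLinearMap f) := by
  obtain ⟨I, hI, hIc, R, S, hRS⟩ := hP
  exact ⟨I, hI, hIc, R.compLinearMap (fun i => f i), S.compLinearMap (fun i => f i),
    fun x => hRS (fun i => f i (x i))⟩

theorem HasPrkDecomp.compLinearMap {P : MultilinearMap k V k} {r : ℕ} (hP : HasPrkDecomp P r)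
    (f : ∀ i, W i →ₗ[k] V i) : HasPrkDecomp (P.compLinearMap f) r := by
  obtain ⟨Q, hQ, rfl⟩ := hP
  exact ⟨fun i => (Q i).compLinearMap f, fun i => (hQ i).compLinearMap f,
    map_sum (MultilinearMap.compLinearMapₗ f) Q Finset.univ⟩

theorem cprk_eq_of_forall_exists_compLinearMap {ι κ : Type*} [Fintype ι] [Fintype κ]
    (P : ι → MultilinearMap k V k) (Q : κ → MultilinearMap k W k)
    (hPQ : ∀ a : ι → k, a ≠ 0 → ∃ b : κ → k, b ≠ 0 ∧
      ∃ f : ∀ i, W i →ₗ[k] V i, ∑ j, b j • Q j = (∑ i, a i • P i).compLinearMap f)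
    (hQP : ∀ b : κ → k, b ≠ 0 → ∃ a : ι → k, a ≠ 0 ∧
      ∃ g : ∀ i, V i →ₗ[k] W i, ∑ i, a i • P i = (∑ j, b j • Q j).compLinearMap g) :
    cprk P = cprk Q := by
  unfold cprk
  congr 1
  ext r
  constructor
  · rintro ⟨a, ha, hr⟩
    obtain ⟨b, hb, f, hf⟩ := hPQ a ha
    exact ⟨b, hb, hf ▸ hr.compLinearMap f⟩
  · rintro ⟨b, hb, hr⟩
    obtain ⟨a, ha, g, hg⟩ := hQP b hb
    exact ⟨a, ha, hg ▸ hr.compLinearMap g⟩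

end PartitionRank

section MatrixSubst

variable {k : Type*} [Field k] {d : ℕ} {s : Fin d → ℕ} {t : ℕ}

def colEmbed (k : Type*) [Field k] {s t : ℕ} (j : Fin t) :
    (Fin s → k) →ₗ[k] Matrix (Fin s) (Fin t) k :=
  (LinearMap.single k (fun _ : Fin t => k) j).compLeft (Fin s)

theorem colProj_colEmbed {s : ℕ} (j j' : Fin t) (x : Fin s → k) :
    colProj k j (colEmbed k j' x) = fun m => (Pi.single j' (x m) : Fin t → k) j := rfl

theorem matrixSubstForm_compLinearMap_colEmbed
    (Q : MultilinearMap k (fun i : Fin d => Fin (s i) → k) k) (j j' : Fin d → Fin t) :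
    (matrixSubstForm Q j).compLinearMap (fun i => colEmbed k (j' i)) =
      if j = j' then Q else 0 := by
  split_ifs with h
  · subst h
    refine MultilinearMap.ext fun x => ?_
    simp [matrixSubstForm, colProj_colEmbed]
  · obtain ⟨i, hi⟩ := Function.ne_iff.mp h
    refine MultilinearMap.ext fun x => Q.map_coord_zero i (funext fun m => ?_)
    simp [colProj_colEmbed, Pi.single_eq_of_ne hi]

variable {ι : Type*} [Fintype ι]
  (P : ι → MultilinearMap k (fun i : Fin d => Fin (s i) → k) k)

theorem sum_smul_matrixSubstForm_compLinearMap_colEmbed (b : ι × (Fin d → Fin t) → k)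
    (j' : Fin d → Fin t) :
    (∑ lj, b lj • matrixSubstForm (P lj.1) lj.2).compLinearMap (fun i => colEmbed k (j' i)) =
      ∑ l, b (l, j') • P l := by
  rw [← MultilinearMap.compLinearMapₗ_apply, map_sum]
  simp only [map_smul, MultilinearMap.compLinearMapₗ_apply, matrixSubstForm_compLinearMap_colEmbed,
    smul_ite, smul_zero, Fintype.sum_prod_type, Finset.sum_ite_eq', Finset.mem_univ, if_true]

theorem sum_ite_smul_matrixSubstForm (a : ι → k) (j' : Fin d → Fin t) :
    ∑ lj : ι × (Fin d → Fin t), (if lj.2 = j' then a lj.1 else 0) • matrixSubstForm (P lj.1) lj.2 =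
      matrixSubstForm (∑ l, a l • P l) j' := by
  simp only [matrixSubstForm, ← MultilinearMap.compLinearMapₗ_apply, map_sum, map_smul,
    Fintype.sum_prod_type, ite_smul, zero_smul, Finset.sum_ite_eq', Finset.mem_univ, if_true]

end MatrixSubst

theorem matrix_subst_family_cprk_general {k : Type*} [Field k] {d : ℕ} {s : Fin d → ℕ} {t n : ℕ}
    (ht : 0 < t)
    (P : Fin n → MultilinearMap k (fun i : Fin d => Fin (s i) → k) k) :
    cprk (fun lj : Fin n × (Fin d → Fin t) => matrixSubstForm (P lj.1) lj.2) = cprk P := by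
  refine cprk_eq_of_forall_exists_compLinearMap _ _ (fun b hb => ?_) (fun a ha => ?_)
  · obtain ⟨⟨l, j⟩, hlj⟩ := Function.ne_iff.mp hb
    exact ⟨fun l => b (l, j), fun h => hlj (congrFun h l), _,
      (sum_smul_matrixSubstForm_compLinearMap_colEmbed P b j).symm⟩
  · obtain ⟨l, hl⟩ := Function.ne_iff.mp ha
    let j₀ : Fin d → Fin t := fun _ => ⟨0, ht⟩
    refine ⟨fun lj => if lj.2 = j₀ then a lj.1 else 0, Function.ne_iff.mpr ⟨(l, j₀), by simpa⟩,
      _, sum_ite_smul_matrixSubstForm P a j₀⟩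

/-- the collective partition rank of the family `(P^l_{j_1,...,j_d})` over all
`l ∈ [n]`, `(j_1,...,j_d) ∈ [t]^d` equals the collective partition rank of `(P_1,...,P_n)`. -/
theorem matrix_subst_family_cprk {k : Type*} [Field k] {d : ℕ} {s : Fin d → ℕ} {t n : ℕ}
    (hd : 2 ≤ d) (hn : 0 < n) (ht : 0 < t)
    (P : Fin n → MultilinearMap k (fun i : Fin d => Fin (s i) → k) k) :
    cprk (fun lj : Fin n × (Fin d → Fin t) => matrixSubstForm (P lj.1) lj.2) = cprk P :=
  matrix_subst_family_cprk_general ht P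
end

section
/- Let G be an abelian group, and Q_1,...,Q_n : (Z^{s_1}) × ... × (Z^{s_d}) → G multilinear maps into G. For a positive integer R let N_R = #{x ∈ Z^s : Q_i(x) = 0 ∀i, 0 ≤ x_j < R ∀j} and N'_R = #{x ∈ Z^s : Q_i(x) = 0 ∀i, −R < x_j < R ∀j}, where s = s_1 + ... + s_d. Then for every positive integer L, N_{LR} ≤ L^s · N'_R. -/
open scoped BigOperators

section Helpers

lemma emb_of_card_le {α β : Type*} [Finite α] [Finite β]
    (h : Nat.card α ≤ Nat.card β) : Nonempty (α ↪ β) := by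
  have := Fintype.ofFinite α
  have := Fintype.ofFinite β
  rw [Nat.card_eq_fintype_card, Nat.card_eq_fintype_card] at h
  exact Function.Embedding.nonempty_of_card_le h

lemma finite_box_fun {κ : Type*} [Finite κ] (P : (κ → ℤ) → Prop) (lo hi : ℤ)
    (h : ∀ z, P z → ∀ j, lo ≤ z j ∧ z j ≤ hi) : Finite {z : κ → ℤ // P z} := by
  have hs : {z : κ → ℤ | P z} ⊆ Set.pi Set.univ (fun _ => Set.Icc lo hi) := by
    intro z hz j _
    exact ⟨(h z hz j).1, (h z hz j).2⟩
  exact (Set.Finite.subset (Set.Finite.pi fun _ => Set.finite_Icc lo hi) hs).to_subtype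

lemma finite_box_pi {ι : Type*} [Finite ι] {κ : ι → Type*} [∀ i, Finite (κ i)]
    (P : (∀ i, κ i → ℤ) → Prop) (lo hi : ℤ)
    (h : ∀ x, P x → ∀ i j, lo ≤ x i j ∧ x i j ≤ hi) :
    Finite {x : ∀ i, κ i → ℤ // P x} := by
  have hs : {x : ∀ i, κ i → ℤ | P x} ⊆
      Set.pi Set.univ (fun i => Set.pi Set.univ (fun _ : κ i => Set.Icc lo hi)) := by
    intro x hx i _
    intro j _
    exact ⟨(h x hx i j).1, (h x hx i j).2⟩
  exact (Set.Finite.subset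
    (Set.Finite.pi fun i => Set.Finite.pi fun _ => Set.finite_Icc lo hi) hs).to_subtype

lemma finite_prod_subtype {Zt Yt : Type*} (P : Zt → Yt → Prop)
    (Cz : Zt → Prop) (Cy : Yt → Prop) [Finite {z // Cz z}] [Finite {y // Cy y}]
    (h : ∀ z y, P z y → Cz z ∧ Cy y) : Finite {p : Zt × Yt // P p.1 p.2} := by
  apply Finite.of_injective (β := {z // Cz z} × {y // Cy y})
    (fun p => (⟨p.1.1, (h _ _ p.2).1⟩, ⟨p.1.2, (h _ _ p.2).2⟩))
  intro p q hpq
  have h1 : p.1.1 = q.1.1 := congrArg (fun t => t.1.1) hpq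
  have h2 : p.1.2 = q.1.2 := congrArg (fun t => t.2.1) hpq
  exact Subtype.ext (Prod.ext h1 h2)

lemma card_le_mul_of_fibers {α β γ : Type*} [Finite α] [Finite β] [Finite γ]
    (f : α → γ) (h : ∀ c, Nat.card {a : α // f a = c} ≤ Nat.card β) :
    Nat.card α ≤ Nat.card γ * Nat.card β := by
  have hfib : ∀ c : γ, Finite {a : α // f a = c} :=
    fun c => Finite.of_injective (fun a => a.1) Subtype.val_injective
  have e : ∀ c, {a : α // f a = c} ↪ β := fun c => (emb_of_card_le (h c)).some
  have aux : ∀ (c c' : γ) (_ : c = c') (w : α) (hw : f w = c) (hw' : f w = c'),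
      e c ⟨w, hw⟩ = e c' ⟨w, hw'⟩ := by
    intro c c' hcc w hw hw'
    subst hcc
    rfl
  have hF : Function.Injective (fun a : α => ((f a, e (f a) ⟨a, rfl⟩) : γ × β)) := by
    intro a a' hfa
    have h1 : f a = f a' := congrArg Prod.fst hfa
    have h2 : e (f a) ⟨a, rfl⟩ = e (f a) ⟨a', h1.symm⟩ := by
      have h3 : e (f a) ⟨a, rfl⟩ = e (f a') ⟨a', rfl⟩ := congrArg Prod.snd hfa
      exact h3.trans (aux (f a') (f a) h1.symm a' rfl h1.symm)
    have := (e (f a)).injective h2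
    exact congrArg Subtype.val this
  calc Nat.card α ≤ Nat.card (γ × β) := Nat.card_le_card_of_injective _ hF
  _ = Nat.card γ * Nat.card β := Nat.card_prod _ _

lemma card_le_card_prod_fst {Y Z Z' : Type*} (P : Y → Z → Prop) (P' : Y → Z' → Prop)
    [Finite {p : Y × Z // P p.1 p.2}] [Finite {p : Y × Z' // P' p.1 p.2}]
    (h : ∀ y, Nat.card {z : Z // P y z} ≤ Nat.card {z' : Z' // P' y z'}) :
    Nat.card {p : Y × Z // P p.1 p.2} ≤ Nat.card {p : Y × Z' // P' p.1 p.2} := by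
  have hfin1 : ∀ y, Finite {z : Z // P y z} := fun y =>
    Finite.of_injective (β := {p : Y × Z // P p.1 p.2})
      (fun z => ⟨(y, z.1), z.2⟩)
      (fun z z' hzz => Subtype.ext (congrArg (fun q => q.1.2) hzz))
  have hfin2 : ∀ y, Finite {z' : Z' // P' y z'} := fun y =>
    Finite.of_injective (β := {p : Y × Z' // P' p.1 p.2})
      (fun z => ⟨(y, z.1), z.2⟩)
      (fun z z' hzz => Subtype.ext (congrArg (fun q => q.1.2) hzz))
  have e : ∀ y, {z : Z // P y z} ↪ {z' : Z' // P' y z'} := fun y => (emb_of_card_le (h y)).some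
  have hF : Function.Injective
      (fun p : {p : Y × Z // P p.1 p.2} =>
        (⟨(p.1.1, (e p.1.1 ⟨p.1.2, p.2⟩).1), (e p.1.1 ⟨p.1.2, p.2⟩).2⟩ :
          {p : Y × Z' // P' p.1 p.2})) := by
    rintro ⟨⟨y, z⟩, hp⟩ ⟨⟨y', z'⟩, hq⟩ hpq
    have h1 : y = y' := congrArg (fun t => t.1.1) hpq
    subst h1
    have h2 : (e y ⟨z, hp⟩).1 = (e y ⟨z', hq⟩).1 := congrArg (fun t => t.1.2) hpq
    have h3 := (e y).injective (Subtype.ext h2)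
    have h4 : z = z' := congrArg Subtype.val h3
    subst h4
    rfl
  exact Nat.card_le_card_of_injective _ hF

lemma card_le_card_prod_snd {Y Z Y' : Type*} (P : Y → Z → Prop) (P' : Y' → Z → Prop)
    [Finite {p : Y × Z // P p.1 p.2}] [Finite {p : Y' × Z // P' p.1 p.2}]
    (h : ∀ z, Nat.card {y : Y // P y z} ≤ Nat.card {y' : Y' // P' y' z}) :
    Nat.card {p : Y × Z // P p.1 p.2} ≤ Nat.card {p : Y' × Z // P' p.1 p.2} := by
  have e1 : {p : Y × Z // P p.1 p.2} ≃ {p : Z × Y // P p.2 p.1} :=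
    (Equiv.prodComm Y Z).subtypeEquiv (fun p => Iff.rfl)
  have e2 : {p : Y' × Z // P' p.1 p.2} ≃ {p : Z × Y' // P' p.2 p.1} :=
    (Equiv.prodComm Y' Z).subtypeEquiv (fun p => Iff.rfl)
  have f1 : Finite {p : Z × Y // P p.2 p.1} := Finite.of_equiv _ e1
  have f2 : Finite {p : Z × Y' // P' p.2 p.1} := Finite.of_equiv _ e2
  rw [Nat.card_congr e1, Nat.card_congr e2]
  exact card_le_card_prod_fst (fun z y => P y z) (fun z y' => P' y' z) h

lemma linear_count {H : Type*} [AddCommGroup H] {κ : Type*} [Finite κ]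
    (φ : (κ → ℤ) →+ H) (c : H) (R : ℕ) :
    Nat.card {z : κ → ℤ // φ z = c ∧ ∀ j, 0 ≤ z j ∧ z j < (R : ℤ)}
      ≤ Nat.card {z : κ → ℤ // φ z = 0 ∧ ∀ j, -(R : ℤ) < z j ∧ z j < R} := by
  by_cases hne : Nonempty {z : κ → ℤ // φ z = c ∧ ∀ j, 0 ≤ z j ∧ z j < (R : ℤ)}
  · obtain ⟨⟨z0, hz0c, hz0b⟩⟩ := hne
    have hfin : Finite {z : κ → ℤ // φ z = 0 ∧ ∀ j, -(R : ℤ) < z j ∧ z j < R} :=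
      finite_box_fun _ (-(R : ℤ)) R (fun z hz j => ⟨(hz.2 j).1.le, (hz.2 j).2.le⟩)
    apply Nat.card_le_card_of_injective
      (fun z => (⟨z.1 - z0, by
          rw [map_sub, z.2.1, hz0c, sub_self], fun j => by
          have h1 := (z.2.2 j).1
          have h2 := (z.2.2 j).2
          have h3 := (hz0b j).1
          have h4 := (hz0b j).2
          constructor <;> [skip; skip] <;> simp only [Pi.sub_apply] <;> omega⟩ :
        {z : κ → ℤ // φ z = 0 ∧ ∀ j, -(R : ℤ) < z j ∧ z j < R}))
    intro z z' hzz
    have hv : z.1 - z0 = z'.1 - z0 := congrArg Subtype.val hzz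
    exact Subtype.ext (sub_left_injective hv)
  · rw [not_nonempty_iff] at hne
    simp [Nat.card_of_isEmpty]

end Helpers

section Key

variable {G : Type*} [AddCommGroup G]

lemma cons_bounds {d : ℕ} {s : Fin (d + 1) → ℕ} (z : Fin (s 0) → ℤ)
    (y : ∀ i : Fin d, Fin (s i.succ) → ℤ) (p : ℤ → Prop) :
    (∀ i j, p (Fin.cons (α := fun i => Fin (s i) → ℤ) z y i j))
      ↔ (∀ j, p (z j)) ∧ (∀ i j, p (y i j)) := by
  constructor
  · intro h
    exact ⟨fun j => by simpa using h 0 j, fun i j => by simpa [Fin.cons_succ] using h i.succ j⟩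
  · rintro ⟨h1, h2⟩ i
    refine Fin.cases ?_ ?_ i
    · simpa using h1
    · intro k
      simpa [Fin.cons_succ] using h2 k

lemma cons_add_eq {d : ℕ} {s : Fin (d + 1) → ℕ} (z : Fin (s 0) → ℤ)
    (y : ∀ i : Fin d, Fin (s i.succ) → ℤ) (a : ∀ i : Fin (d + 1), Fin (s i) → ℤ) :
    Fin.cons (α := fun i => Fin (s i) → ℤ) z y + a
      = Fin.cons (α := fun i => Fin (s i) → ℤ) (z + a 0) (y + fun i : Fin d => a (Fin.succ i)) := by
  funext i
  refine Fin.cases ?_ ?_ i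
  · simp
  · intro k
    simp [Fin.cons_succ]

lemma key_lemma (n : ℕ) : ∀ (d : ℕ) (s : Fin d → ℕ)
    (Q : Fin n → MultilinearMap ℤ (fun i : Fin d => Fin (s i) → ℤ) G)
    (a : ∀ i : Fin d, Fin (s i) → ℤ) (R : ℕ),
    Nat.card {x : ∀ i : Fin d, Fin (s i) → ℤ //
        (∀ l, Q l (x + a) = 0) ∧ ∀ i j, 0 ≤ x i j ∧ x i j < (R : ℤ)}
      ≤ Nat.card {x : ∀ i : Fin d, Fin (s i) → ℤ //
        (∀ l, Q l x = 0) ∧ ∀ i j, -(R : ℤ) < x i j ∧ x i j < R} := by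
  intro d
  induction d with
  | zero =>
    intro s Q a R
    apply le_of_eq
    apply Nat.card_congr
    apply Equiv.subtypeEquivRight
    intro x
    constructor
    · rintro ⟨h1, _⟩
      refine ⟨fun l => ?_, fun i j => i.elim0⟩
      rw [Subsingleton.elim x (x + a)]
      exact h1 l
    · rintro ⟨h1, _⟩
      exact ⟨fun l => by rw [Subsingleton.elim (x + a) x]; exact h1 l, fun i j => i.elim0⟩
  | succ d ih =>
    intro s Q a R
    set Zt := Fin (s 0) → ℤ with hZt
    set Yt := (∀ i : Fin d, Fin (s i.succ) → ℤ) with hYt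
    set a' : ∀ i : Fin d, Fin (s i.succ) → ℤ := fun i => a i.succ with ha'
    -- predicates
    set PA : Zt → Yt → Prop := fun z y =>
      (∀ l, Q l (Fin.cons (α := fun i => Fin (s i) → ℤ) z y + a) = 0) ∧
      (∀ j, 0 ≤ z j ∧ z j < (R : ℤ)) ∧ (∀ i j, 0 ≤ y i j ∧ y i j < (R : ℤ)) with hPA
    set PM : Zt → Yt → Prop := fun z y =>
      (∀ l, (Q l).curryLeft z (y + a') = 0) ∧
      (∀ j, -(R : ℤ) < z j ∧ z j < (R : ℤ)) ∧ (∀ i j, 0 ≤ y i j ∧ y i j < (R : ℤ)) with hPM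
    set PB : Zt → Yt → Prop := fun z y =>
      (∀ l, Q l (Fin.cons (α := fun i => Fin (s i) → ℤ) z y) = 0) ∧
      (∀ j, -(R : ℤ) < z j ∧ z j < (R : ℤ)) ∧ (∀ i j, -(R : ℤ) < y i j ∧ y i j < (R : ℤ)) with hPB
    -- step 0 : card A = card A'
    have e0 : {p : Zt × Yt // PA p.1 p.2} ≃
        {x : ∀ i : Fin (d + 1), Fin (s i) → ℤ //
          (∀ l, Q l (x + a) = 0) ∧ ∀ i j, 0 ≤ x i j ∧ x i j < (R : ℤ)} := by
      refine (Fin.consEquiv (fun i => Fin (s i) → ℤ)).subtypeEquiv (fun p => ?_)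
      rw [hPA]
      have hx : (Fin.consEquiv fun i => Fin (s i) → ℤ) p
          = Fin.cons (α := fun i => Fin (s i) → ℤ) p.1 p.2 := rfl
      rw [hx, cons_bounds p.1 p.2 (fun t => 0 ≤ t ∧ t < (R : ℤ))]
    have e3 : {p : Zt × Yt // PB p.1 p.2} ≃
        {x : ∀ i : Fin (d + 1), Fin (s i) → ℤ //
          (∀ l, Q l x = 0) ∧ ∀ i j, -(R : ℤ) < x i j ∧ x i j < (R : ℤ)} := by
      refine (Fin.consEquiv (fun i => Fin (s i) → ℤ)).subtypeEquiv (fun p => ?_)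
      rw [hPB]
      have hx : (Fin.consEquiv fun i => Fin (s i) → ℤ) p
          = Fin.cons (α := fun i => Fin (s i) → ℤ) p.1 p.2 := rfl
      rw [hx, cons_bounds p.1 p.2 (fun t => -(R : ℤ) < t ∧ t < (R : ℤ))]
    -- finiteness
    have finZ01 : Finite {z : Zt // ∀ j, 0 ≤ z j ∧ z j < (R : ℤ)} :=
      finite_box_fun _ 0 R (fun z hz j => ⟨(hz j).1, (hz j).2.le⟩)
    have finZsym : Finite {z : Zt // ∀ j, -(R : ℤ) < z j ∧ z j < (R : ℤ)} :=
      finite_box_fun _ (-(R : ℤ)) R (fun z hz j => ⟨(hz j).1.le, (hz j).2.le⟩)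
    have finY01 : Finite {y : Yt // ∀ i j, 0 ≤ y i j ∧ y i j < (R : ℤ)} :=
      finite_box_pi _ 0 R (fun y hy i j => ⟨(hy i j).1, (hy i j).2.le⟩)
    have finYsym : Finite {y : Yt // ∀ i j, -(R : ℤ) < y i j ∧ y i j < (R : ℤ)} :=
      finite_box_pi _ (-(R : ℤ)) R (fun y hy i j => ⟨(hy i j).1.le, (hy i j).2.le⟩)
    have finA : Finite {p : Zt × Yt // PA p.1 p.2} :=
      finite_prod_subtype PA _ _ (fun z y hp => ⟨hp.2.1, hp.2.2⟩)
    have finM : Finite {p : Zt × Yt // PM p.1 p.2} :=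
      finite_prod_subtype PM _ _ (fun z y hp => ⟨hp.2.1, hp.2.2⟩)
    have finB : Finite {p : Zt × Yt // PB p.1 p.2} :=
      finite_prod_subtype PB _ _ (fun z y hp => ⟨hp.2.1, hp.2.2⟩)
    -- step 1 : card A' ≤ card M, fibers over y
    have step1 : Nat.card {p : Zt × Yt // PA p.1 p.2} ≤ Nat.card {p : Zt × Yt // PM p.1 p.2} := by
      refine card_le_card_prod_snd PA PM (fun y => ?_)
      by_cases hy : ∀ i j, 0 ≤ y i j ∧ y i j < (R : ℤ)
      · set φ : Zt →+ (Fin n → G) := AddMonoidHom.mk'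
          (fun z l => (Q l).curryLeft z (y + a'))
          (by
            intro z z'
            funext l
            simp [map_add]) with hφ
        set c : Fin n → G := fun l => -((Q l).curryLeft (a 0) (y + a')) with hc
        have eA : {z : Zt // PA z y} ≃
            {z : Zt // φ z = c ∧ ∀ j, 0 ≤ z j ∧ z j < (R : ℤ)} := by
          refine Equiv.subtypeEquivRight (fun z => ?_)
          rw [hPA]
          simp only
          constructor
          · rintro ⟨h1, h2, _⟩
            refine ⟨funext fun l => ?_, h2⟩
            show ((Q l).curryLeft z) (y + a') = -(((Q l).curryLeft (a 0)) (y + a'))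
            apply eq_neg_of_add_eq_zero_left
            have h := h1 l
            rwa [cons_add_eq, ← MultilinearMap.curryLeft_apply,
              map_add ((Q l).curryLeft) z (a 0), MultilinearMap.add_apply] at h
          · rintro ⟨h1, h2⟩
            refine ⟨fun l => ?_, h2, hy⟩
            have h : ((Q l).curryLeft z) (y + a') = -(((Q l).curryLeft (a 0)) (y + a')) :=
              congrFun h1 l
            rw [cons_add_eq, ← MultilinearMap.curryLeft_apply,
              map_add ((Q l).curryLeft) z (a 0), MultilinearMap.add_apply]
            show ((Q l).curryLeft z) (y + a') + ((Q l).curryLeft (a 0)) (y + a') = 0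
            rw [h]
            exact neg_add_cancel _
        have eM : {z : Zt // PM z y} ≃
            {z : Zt // φ z = 0 ∧ ∀ j, -(R : ℤ) < z j ∧ z j < (R : ℤ)} := by
          refine Equiv.subtypeEquivRight (fun z => ?_)
          rw [hPM]
          simp only
          constructor
          · rintro ⟨h1, h2, _⟩
            exact ⟨funext fun l => h1 l, h2⟩
          · rintro ⟨h1, h2⟩
            exact ⟨fun l => congrFun h1 l, h2, hy⟩
        rw [Nat.card_congr eA, Nat.card_congr eM]
        exact linear_count φ c R
      · have h1 : IsEmpty {z : Zt // PA z y} := ⟨fun z => hy z.2.2.2⟩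
        have h2 : IsEmpty {z : Zt // PM z y} := ⟨fun z => hy z.2.2.2⟩
        simp [Nat.card_of_isEmpty]
    -- step 2 : card M ≤ card B', fibers over z
    have step2 : Nat.card {p : Zt × Yt // PM p.1 p.2} ≤ Nat.card {p : Zt × Yt // PB p.1 p.2} := by
      refine card_le_card_prod_fst PM PB (fun z => ?_)
      by_cases hz : ∀ j, -(R : ℤ) < z j ∧ z j < (R : ℤ)
      · set Q' : Fin n → MultilinearMap ℤ (fun i : Fin d => Fin (s i.succ) → ℤ) G :=
          fun l => (Q l).curryLeft z with hQ'
        have eM : {y : Yt // PM z y} ≃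
            {y : Yt // (∀ l, Q' l (y + a') = 0) ∧ ∀ i j, 0 ≤ y i j ∧ y i j < (R : ℤ)} := by
          refine Equiv.subtypeEquivRight (fun y => ?_)
          rw [hPM, hQ']
          simp only
          exact ⟨fun h => ⟨h.1, h.2.2⟩, fun h => ⟨h.1, hz, h.2⟩⟩
        have eB : {y : Yt // PB z y} ≃
            {y : Yt // (∀ l, Q' l y = 0) ∧ ∀ i j, -(R : ℤ) < y i j ∧ y i j < (R : ℤ)} := by
          refine Equiv.subtypeEquivRight (fun y => ?_)
          rw [hPB, hQ']
          simp only [MultilinearMap.curryLeft_apply]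
          exact ⟨fun h => ⟨h.1, h.2.2⟩, fun h => ⟨h.1, hz, h.2⟩⟩
        rw [Nat.card_congr eM, Nat.card_congr eB]
        exact ih (fun i => s i.succ) Q' a' R
      · have h1 : IsEmpty {y : Yt // PM z y} := ⟨fun y => hz y.2.2.1⟩
        have h2 : IsEmpty {y : Yt // PB z y} := ⟨fun y => hz y.2.2.1⟩
        simp [Nat.card_of_isEmpty]
    calc Nat.card _ = Nat.card {p : Zt × Yt // PA p.1 p.2} := (Nat.card_congr e0).symm
      _ ≤ Nat.card {p : Zt × Yt // PM p.1 p.2} := step1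
      _ ≤ Nat.card {p : Zt × Yt // PB p.1 p.2} := step2
      _ = Nat.card _ := Nat.card_congr e3

end Key

def intBoxEquivFin (L : ℕ) : {t : ℤ // 0 ≤ t ∧ t < (L : ℤ)} ≃ Fin L where
  toFun t := ⟨t.1.toNat, by obtain ⟨t, h1, h2⟩ := t; simp only; omega⟩
  invFun k := ⟨(k.1 : ℤ), by obtain ⟨k, hk⟩ := k; simp only; omega⟩
  left_inv t := Subtype.ext (by obtain ⟨t, h1, h2⟩ := t; simp only; omega)
  right_inv k := Fin.ext (by obtain ⟨k, hk⟩ := k; simp only; omega)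

/-- scaling lemma: for multilinear maps `Q_1,...,Q_n` from
`ℤ^{s_1} × ... × ℤ^{s_d}` to an abelian group `G`, the number of common zeros in the
box `[0, LR)^s` is at most `L^s` times the number of common zeros in `(-R, R)^s`,
where `s = s_1 + ... + s_d`. -/
theorem scaling_lemma (G : Type*) [AddCommGroup G] (d n : ℕ) (s : Fin d → ℕ)
    (Q : Fin n → MultilinearMap ℤ (fun i : Fin d => Fin (s i) → ℤ) G)
    (R L : ℕ) (hR : 0 < R) (hL : 0 < L) :
    Nat.card {x : ∀ i : Fin d, Fin (s i) → ℤ //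
        (∀ l, Q l x = 0) ∧ ∀ i j, 0 ≤ x i j ∧ x i j < (L : ℤ) * R}
      ≤ L ^ (∑ i, s i) *
        Nat.card {x : ∀ i : Fin d, Fin (s i) → ℤ //
          (∀ l, Q l x = 0) ∧ ∀ i j, -(R : ℤ) < x i j ∧ x i j < R} := by
  have hRz : (0 : ℤ) < (R : ℤ) := by exact_mod_cast hR
  have finα : Finite {x : ∀ i : Fin d, Fin (s i) → ℤ //
      (∀ l, Q l x = 0) ∧ ∀ i j, 0 ≤ x i j ∧ x i j < (L : ℤ) * R} :=
    finite_box_pi _ 0 ((L : ℤ) * R) (fun x hx i j => ⟨(hx.2 i j).1, (hx.2 i j).2.le⟩)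
  have finβ : Finite {x : ∀ i : Fin d, Fin (s i) → ℤ //
      (∀ l, Q l x = 0) ∧ ∀ i j, -(R : ℤ) < x i j ∧ x i j < R} :=
    finite_box_pi _ (-(R : ℤ)) R (fun x hx i j => ⟨(hx.2 i j).1.le, (hx.2 i j).2.le⟩)
  have finΩ : Finite {ω : ∀ i : Fin d, Fin (s i) → ℤ // ∀ i j, 0 ≤ ω i j ∧ ω i j < (L : ℤ)} :=
    finite_box_pi _ 0 L (fun ω hω i j => ⟨(hω i j).1, (hω i j).2.le⟩)
  -- the rounding map
  have fbound : ∀ (x : ∀ i : Fin d, Fin (s i) → ℤ),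
      (∀ i j, 0 ≤ x i j ∧ x i j < (L : ℤ) * R) →
      ∀ i j, 0 ≤ x i j / (R : ℤ) ∧ x i j / (R : ℤ) < (L : ℤ) := by
    intro x hx i j
    refine ⟨Int.ediv_nonneg (hx i j).1 hRz.le, ?_⟩
    by_contra hcon
    push_neg at hcon
    have h1 : x i j / (R : ℤ) * R ≤ x i j := Int.ediv_mul_le _ (by positivity)
    have h2 : (L : ℤ) * R ≤ x i j / (R : ℤ) * R := mul_le_mul_of_nonneg_right hcon hRz.le
    have h3 := (hx i j).2
    linarith
  set f : {x : ∀ i : Fin d, Fin (s i) → ℤ //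
      (∀ l, Q l x = 0) ∧ ∀ i j, 0 ≤ x i j ∧ x i j < (L : ℤ) * R} →
      {ω : ∀ i : Fin d, Fin (s i) → ℤ // ∀ i j, 0 ≤ ω i j ∧ ω i j < (L : ℤ)} :=
    fun x => ⟨fun i j => x.1 i j / (R : ℤ), fbound x.1 x.2.2⟩ with hf
  -- fiber bound
  have fiber : ∀ ω, Nat.card {x // f x = ω}
      ≤ Nat.card {x : ∀ i : Fin d, Fin (s i) → ℤ //
          (∀ l, Q l x = 0) ∧ ∀ i j, -(R : ℤ) < x i j ∧ x i j < R} := by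
    intro ω
    set aω : ∀ i : Fin d, Fin (s i) → ℤ := fun i j => (R : ℤ) * ω.1 i j with haω
    have fin1 : Finite {r : ∀ i : Fin d, Fin (s i) → ℤ //
        (∀ l, Q l (r + aω) = 0) ∧ ∀ i j, 0 ≤ r i j ∧ r i j < (R : ℤ)} :=
      finite_box_pi _ 0 R (fun r hr i j => ⟨(hr.2 i j).1, (hr.2 i j).2.le⟩)
    have step : Nat.card {x // f x = ω} ≤ Nat.card {r : ∀ i : Fin d, Fin (s i) → ℤ //
        (∀ l, Q l (r + aω) = 0) ∧ ∀ i j, 0 ≤ r i j ∧ r i j < (R : ℤ)} := by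
      have hg : ∀ (x : {x // f x = ω}), (∀ l, Q l ((fun i => x.1.1 i - aω i) + aω) = 0) ∧
          ∀ i j, 0 ≤ (fun i => x.1.1 i - aω i) i j ∧ (fun i => x.1.1 i - aω i) i j < (R : ℤ) := by
        intro x
        have hsum : (fun i => x.1.1 i - aω i) + aω = x.1.1 := by
          funext i
          exact sub_add_cancel _ _
        constructor
        · intro l
          rw [hsum]
          exact x.1.2.1 l
        · intro i j
          have hdiv : x.1.1 i j / (R : ℤ) = ω.1 i j := by
            have hv := congrArg Subtype.val x.2
            exact congrFun (congrFun hv i) j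
          have hmod : x.1.1 i j - aω i j = x.1.1 i j % (R : ℤ) := by
            rw [haω]
            simp only
            rw [← hdiv, ← Int.emod_def]
          simp only [Pi.sub_apply]
          rw [show aω i j = (R : ℤ) * ω.1 i j from rfl] at hmod ⊢
          rw [hmod]
          exact ⟨Int.emod_nonneg _ (ne_of_gt hRz), Int.emod_lt_of_pos _ hRz⟩
      refine Nat.card_le_card_of_injective (fun x => ⟨fun i => x.1.1 i - aω i, hg x⟩) ?_
      intro x x' hxx
      have hv : (fun i => x.1.1 i - aω i) = (fun i => x'.1.1 i - aω i) :=
        congrArg Subtype.val hxx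
      have : x.1.1 = x'.1.1 := by
        funext i
        exact sub_left_injective (congrFun hv i)
      exact Subtype.ext (Subtype.ext this)
    exact step.trans (key_lemma n d s Q aω R)
  have main := card_le_mul_of_fibers f fiber
  -- card of Ω
  have hΩ : Nat.card {ω : ∀ i : Fin d, Fin (s i) → ℤ // ∀ i j, 0 ≤ ω i j ∧ ω i j < (L : ℤ)}
      = L ^ (∑ i, s i) := by
    have e1 : {ω : ∀ i : Fin d, Fin (s i) → ℤ // ∀ i j, 0 ≤ ω i j ∧ ω i j < (L : ℤ)}
        ≃ ∀ i : Fin d, Fin (s i) → Fin L :=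
      (Equiv.subtypePiEquivPi).trans
        (Equiv.piCongrRight fun i =>
          (Equiv.subtypePiEquivPi).trans (Equiv.piCongrRight fun j => intBoxEquivFin L))
    rw [Nat.card_congr e1, Nat.card_pi]
    have hc : ∀ i : Fin d, Nat.card (Fin (s i) → Fin L) = L ^ s i := by
      intro i
      rw [Nat.card_fun, Nat.card_eq_fintype_card, Nat.card_eq_fintype_card,
        Fintype.card_fin, Fintype.card_fin]
    calc ∏ i : Fin d, Nat.card (Fin (s i) → Fin L) = ∏ i : Fin d, L ^ s i :=
          Finset.prod_congr rfl (fun i _ => hc i)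
      _ = L ^ (∑ i, s i) := Finset.prod_pow_eq_pow_sum _ _ _
  rw [hΩ] at main
  exact main
end

section
/- Let P : Q^{s_1} × ... × Q^{s_d} → Q be a multilinear form with integer coefficients, d ≥ 2. Suppose for infinitely many primes p the reduction P mod p satisfies prk_{F̄_p}(P mod p) ≥ r̄. Then prk_{Q̄}(P) ≥ r̄. -/
open scoped BigOperators

/-- The multilinear form over a field `K` with integer coefficient tensor `c`:
`P(x_1,...,x_d) = Σ_{k_1,...,k_d} c(k) Π_i x_i(k_i)`. -/
noncomputable def intForm (K : Type*) [Field K] {d : ℕ} {s : Fin d → ℕ}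
    (c : (∀ i : Fin d, Fin (s i)) → ℤ) :
    MultilinearMap K (fun i : Fin d => Fin (s i) → K) K :=
  ∑ kv : (∀ i : Fin d, Fin (s i)),
    (MultilinearMap.mkPiRing K (Fin d) ((c kv : ℤ) : K)).compLinearMap
      (fun i => LinearMap.proj (kv i))

/-!
Write `P = Σ_k c(k) Π_i x_i(k_i)`. Evaluating at basis vectors shows that `P` is a sum of `m`
partition-rank-one forms iff the coefficient tensor decomposes as `c = Σ_{i<m} a_i ⊗ b_i`, where
`a_i` is a tensor in the coordinates of a nonempty proper `I_i ⊆ Fin d` and `b_i` one in the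
remaining coordinates. For fixed `m` this is a finite disjunction, over the choices of the `I_i`,
of solvability statements for systems of polynomial equations with integer coefficients in the
entries of the `a_i, b_i`: a first-order sentence in the language of rings. By the Lefschetz
principle a sentence true in one algebraically closed field of characteristic zero holds in every
algebraically closed field of characteristic `p` for all but finitely many primes `p`, so it
holds for one of the infinitely many primes at which the partition rank is at least `r̄`.
-/

section CoeffForm

variable {K : Type*} [Field K] {ι : Type*} [Fintype ι] [DecidableEq ι] {s : ι → ℕ}

variable (K) in
noncomputable def coeffForm (a : (∀ i, Fin (s i)) → K) :
    MultilinearMap K (fun i : ι => Fin (s i) → K) K :=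
  ∑ kv : (∀ i, Fin (s i)),
    (MultilinearMap.mkPiRing K ι (a kv)).compLinearMap (fun i => LinearMap.proj (kv i))

theorem coeffForm_apply (a : (∀ i, Fin (s i)) → K) (x : ∀ i, Fin (s i) → K) :
    coeffForm K a x = ∑ kv : (∀ i, Fin (s i)), a kv * ∏ i, x i (kv i) := by
  simp [coeffForm, MultilinearMap.mkPiRing_apply, mul_comm]

theorem coeffForm_apply_single (a : (∀ i, Fin (s i)) → K) (kv : ∀ i, Fin (s i)) :
    coeffForm K a (fun i => Pi.single (kv i) 1) = a kv := by
  simp [coeffForm_apply, Pi.single_apply, Finset.prod_boole, ← funext_iff]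

theorem coeffForm_mul_apply (p : ι → Prop) [DecidablePred p]
    (a : ((j : {i // p i}) → Fin (s j)) → K) (b : ((j : {i // ¬ p i}) → Fin (s j)) → K)
    (x : ∀ i, Fin (s i) → K) :
    coeffForm K (fun kv => a (fun j => kv j.1) * b (fun j => kv j.1)) x
      = coeffForm K a (fun j => x j.1) * coeffForm K b (fun j => x j.1) := by
  rw [coeffForm_apply, coeffForm_apply, coeffForm_apply, Finset.sum_mul_sum,
    ← Fintype.sum_prod_type', ← (Equiv.piEquivPiSubtypeProd p (fun i => Fin (s i))).sum_comp]
  refine Finset.sum_congr rfl fun kv _ => ?_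
  rw [← Fintype.prod_subtype_mul_prod_subtype p]
  simp only [Equiv.piEquivPiSubtypeProd_apply]
  ring

end CoeffForm

section CoeffDecomp

variable {K : Type*} [Field K] {d : ℕ} {s : Fin d → ℕ}

def IsCoeffDecompAlong (a : (∀ i, Fin (s i)) → K) {m : ℕ} (I : Fin m → Finset (Fin d)) :
    Prop :=
  ∃ (b : ∀ i, ((j : {x // x ∈ I i}) → Fin (s j)) → K)
    (b' : ∀ i, ((j : {x // x ∉ I i}) → Fin (s j)) → K),
    ∀ kv, a kv = ∑ i, b i (fun j => kv j) * b' i (fun j => kv j)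

def HasCoeffPrkDecomp (a : (∀ i, Fin (s i)) → K) (m : ℕ) : Prop :=
  ∃ I : Fin m → Finset (Fin d), (∀ i, (I i).Nonempty) ∧ (∀ i, (I i)ᶜ.Nonempty) ∧
    IsCoeffDecompAlong a I

theorem HasPrkDecomp.hasCoeffPrkDecomp {a : (∀ i, Fin (s i)) → K} {m : ℕ}
    (h : HasPrkDecomp (coeffForm K a) m) : HasCoeffPrkDecomp a m := by
  classical
  obtain ⟨Q, hQ, hsum⟩ := h
  choose I hI hIc R S hRS using hQ
  refine ⟨fun i => (I i).toFinset, fun i => by simpa using hI i,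
    fun i => by simpa [← Set.toFinset_compl] using hIc i,
    fun i g => R i (fun j => Pi.single (g ⟨j, by simp⟩) 1),
    fun i g => S i (fun j => Pi.single (g ⟨j, Set.mem_toFinset.not.2 j.2⟩) 1), fun kv => ?_⟩
  rw [← coeffForm_apply_single a kv, hsum, FunLike.coe_sum, Finset.sum_apply]
  exact Finset.sum_congr rfl fun i _ => hRS i _

theorem HasCoeffPrkDecomp.hasPrkDecomp {a : (∀ i, Fin (s i)) → K} {m : ℕ}
    (h : HasCoeffPrkDecomp a m) : HasPrkDecomp (coeffForm K a) m := by
  obtain ⟨I, hI, hIc, b, b', hab⟩ := h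
  refine ⟨fun i => coeffForm K (fun kv => b i (fun j => kv j) * b' i (fun j => kv j)),
    fun i => ⟨{x | x ∈ I i}, hI i, by simpa using (hIc i).to_set, _, _,
      coeffForm_mul_apply (· ∈ I i) (b i) (b' i)⟩, ?_⟩
  refine MultilinearMap.ext fun x => ?_
  simp only [FunLike.coe_sum, Finset.sum_apply, coeffForm_apply, hab, Finset.sum_mul]
  exact Finset.sum_comm

theorem hasPrkDecomp_coeffForm_iff {a : (∀ i, Fin (s i)) → K} {m : ℕ} :
    HasPrkDecomp (coeffForm K a) m ↔ HasCoeffPrkDecomp a m :=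
  ⟨HasPrkDecomp.hasCoeffPrkDecomp, HasCoeffPrkDecomp.hasPrkDecomp⟩

theorem intForm_eq_coeffForm (c : (∀ i, Fin (s i)) → ℤ) :
    intForm K c = coeffForm K (fun kv => (c kv : K)) := rfl

end CoeffDecomp

open FirstOrder FirstOrder.Language FirstOrder.Ring FirstOrder.Field

section Sentence

variable {d : ℕ} {s : Fin d → ℕ}

abbrev CoeffDecompVar (s : Fin d → ℕ) {m : ℕ} (I : Fin m → Finset (Fin d)) : Type :=
  (Σ i, ((j : {x // x ∈ I i}) → Fin (s j))) ⊕ (Σ i, ((j : {x // x ∉ I i}) → Fin (s j)))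

noncomputable def coeffDecompPoly {m : ℕ} (I : Fin m → Finset (Fin d))
    (kv : ∀ i, Fin (s i)) : FreeCommRing (CoeffDecompVar s I) :=
  ∑ i, FreeCommRing.of (.inl ⟨i, fun j => kv j⟩) *
    FreeCommRing.of (.inr ⟨i, fun j => kv j⟩)

noncomputable def coeffDecompSentence (c : (∀ i, Fin (s i)) → ℤ) {m : ℕ}
    (I : Fin m → Finset (Fin d)) : Language.ring.Sentence :=
  Formula.iExs (CoeffDecompVar s I) <| Formula.relabel Sum.inr <|
    BoundedFormula.iInf fun kv : ∀ i, Fin (s i) =>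
      Term.equal (termOfFreeCommRing (c kv : FreeCommRing _))
        (termOfFreeCommRing (coeffDecompPoly I kv))

noncomputable def prkDecompSentence (c : (∀ i, Fin (s i)) → ℤ) (m : ℕ) :
    Language.ring.Sentence :=
  BoundedFormula.iSup fun I : {I : Fin m → Finset (Fin d) //
    (∀ i, (I i).Nonempty) ∧ ∀ i, (I i)ᶜ.Nonempty} => coeffDecompSentence c I.1

variable {K : Type*} [Field K] [CompatibleRing K]

theorem realize_coeffDecompSentence (c : (∀ i, Fin (s i)) → ℤ) {m : ℕ}
    (I : Fin m → Finset (Fin d)) :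
    K ⊨ coeffDecompSentence c I ↔ IsCoeffDecompAlong (fun kv => (c kv : K)) I := by
  simp only [coeffDecompSentence, Sentence.Realize, Formula.realize_iExs, Formula.realize_relabel]
  simp only [Formula.Realize, BoundedFormula.realize_iInf, Term.equal,
    BoundedFormula.realize_bdEqual, Term.realize_relabel, Sum.elim_comp_inl,
    realize_termOfFreeCommRing, map_intCast]
  constructor
  · rintro ⟨v, hv⟩
    exact ⟨fun i g => v (.inl ⟨i, g⟩), fun i g => v (.inr ⟨i, g⟩),
      fun kv => by simpa [coeffDecompPoly] using hv kv⟩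
  · rintro ⟨b, b', h⟩
    exact ⟨Sum.elim (fun q => b q.1 q.2) (fun q => b' q.1 q.2),
      fun kv => by simpa [coeffDecompPoly] using h kv⟩

theorem realize_prkDecompSentence (c : (∀ i, Fin (s i)) → ℤ) (m : ℕ) :
    K ⊨ prkDecompSentence c m ↔ HasPrkDecomp (intForm K c) m := by
  rw [intForm_eq_coeffForm, hasPrkDecomp_coeffForm_iff]
  refine BoundedFormula.realize_iSup.trans <| Subtype.exists.trans <| exists_congr fun I => ?_
  exact ⟨fun ⟨⟨hI, hIc⟩, h⟩ => ⟨hI, hIc, (realize_coeffDecompSentence c I).1 h⟩,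
    fun ⟨hI, hIc, h⟩ => ⟨⟨hI, hIc⟩, (realize_coeffDecompSentence c I).2 h⟩⟩

end Sentence

theorem finite_setOf_prime_not_ACF_models {φ : Language.ring.Sentence}
    (h : Theory.ACF 0 ⊨ᵇ φ) : {p : ℕ | p.Prime ∧ ¬ Theory.ACF p ⊨ᵇ φ}.Finite :=
  ((finite_ACF_prime_not_realize_of_ACF_zero_realize φ h).image (↑)).subset
    fun p ⟨hp, hφ⟩ => ⟨⟨p, hp⟩, hφ, rfl⟩

theorem partition_rank_transfer_general {d : ℕ} {s : Fin d → ℕ}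
    (c : (∀ i : Fin d, Fin (s i)) → ℤ) (rb : ℕ)
    (hinf : {p : ℕ | p.Prime ∧
      ∀ (K : Type) [Field K] [IsAlgClosed K] [CharP K p],
        ∀ m : ℕ, HasPrkDecomp (intForm K c) m → rb ≤ m}.Infinite) :
    ∀ (K : Type) [Field K] [IsAlgClosed K] [CharZero K],
      ∀ m : ℕ, HasPrkDecomp (intForm K c) m → rb ≤ m := by
  intro K _ _ _ m hK
  let := compatibleRingOfRing K
  have h0 : Theory.ACF 0 ⊨ᵇ prkDecompSentence c m :=
    ((ACF_isComplete (Or.inr rfl)).realize_sentence_iff _ K).1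
      ((realize_prkDecompSentence c m).2 hK)
  obtain ⟨p, ⟨hp, hrank⟩, hpφ⟩ :=
    (hinf.sdiff (finite_setOf_prime_not_ACF_models h0)).nonempty
  have hp_models : Theory.ACF p ⊨ᵇ prkDecompSentence c m := by simpa [hp] using hpφ
  have : Fact p.Prime := ⟨hp⟩
  let := compatibleRingOfRing (AlgebraicClosure (ZMod p))
  exact hrank _ m <| (realize_prkDecompSentence c m).1 <|
    hp_models.realize_sentence (AlgebraicClosure (ZMod p))

/-- if a multilinear form with integer coefficients has partition rank
`≥ r̄` over the algebraic closure of `F_p` (equivalently over every algebraically closed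
field of characteristic `p`) for infinitely many primes `p`, then it has partition rank
`≥ r̄` over the algebraic closure of `ℚ` (equivalently over every algebraically closed
field of characteristic `0`). -/
theorem partition_rank_transfer {d : ℕ} (hd : 2 ≤ d) {s : Fin d → ℕ}
    (c : (∀ i : Fin d, Fin (s i)) → ℤ) (rb : ℕ)
    (hinf : {p : ℕ | p.Prime ∧
      ∀ (K : Type) [Field K] [IsAlgClosed K] [CharP K p],
        ∀ m : ℕ, HasPrkDecomp (intForm K c) m → rb ≤ m}.Infinite) :
    ∀ (K : Type) [Field K] [IsAlgClosed K] [CharZero K],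
      ∀ m : ℕ, HasPrkDecomp (intForm K c) m → rb ≤ m :=
  partition_rank_transfer_general c rb hinf
end
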